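/- Let H₀, H₁ be complex Hilbert spaces and L ∈ B(H₀; H₁). Then the block operator V_L := [[(I + L*L)^{-1/2}, −L*(I + LL*)^{-1/2}], [L(I + L*L)^{-1/2}, (I + LL*)^{-1/2}]] on the Hilbert direct sum H₀ ⊕ H₁ is unitary, where (I + L*L)^{-1/2} and (I + LL*)^{-1/2} are the inverse square roots of the positive invertible operators I + L*L and I + LL*, given by the continuous functional calculus (i.e. by applying the continuous function x ↦ (1 + x)^{-1/2} to L*L and LL* respectively). -/

import Mathlib

/-!
Write `T = L*L`, `T' = LL*`, `R = (1 + T)^{-1/2}` and `S = (1 + T')^{-1/2}`. The argument uses only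
that `R` is self-adjoint, commutes with `T` and satisfies `R² (1 + T) = 1`, and likewise for `S`.
The entries of `V_L* V_L` are then `R (1 + T) R = 1`, `S (1 + T') S = 1` and cancelling pairs; those
of `V_L V_L*` follow in the same way once `L R² = S² L` is known, and this intertwining relation is
obtained by inverting both sides of `L (1 + T) = (1 + T') L`.
-/

open ContinuousLinearMap

noncomputable section

variable (H₀ H₁ : Type*) [NormedAddCommGroup H₀] [InnerProductSpace ℂ H₀] [CompleteSpace H₀]
  [NormedAddCommGroup H₁] [InnerProductSpace ℂ H₁] [CompleteSpace H₁]

def inl0 : H₀ →L[ℂ] WithLp 2 (H₀ × H₁) :=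
  ((WithLp.prodContinuousLinearEquiv 2 ℂ H₀ H₁).symm : H₀ × H₁ →L[ℂ] WithLp 2 (H₀ × H₁)) ∘L
    ContinuousLinearMap.inl ℂ H₀ H₁

def inr1 : H₁ →L[ℂ] WithLp 2 (H₀ × H₁) :=
  ((WithLp.prodContinuousLinearEquiv 2 ℂ H₀ H₁).symm : H₀ × H₁ →L[ℂ] WithLp 2 (H₀ × H₁)) ∘L
    ContinuousLinearMap.inr ℂ H₀ H₁

def fst0 : WithLp 2 (H₀ × H₁) →L[ℂ] H₀ :=
  ContinuousLinearMap.fst ℂ H₀ H₁ ∘L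
    ((WithLp.prodContinuousLinearEquiv 2 ℂ H₀ H₁) : WithLp 2 (H₀ × H₁) →L[ℂ] H₀ × H₁)

def snd1 : WithLp 2 (H₀ × H₁) →L[ℂ] H₁ :=
  ContinuousLinearMap.snd ℂ H₀ H₁ ∘L
    ((WithLp.prodContinuousLinearEquiv 2 ℂ H₀ H₁) : WithLp 2 (H₀ × H₁) →L[ℂ] H₀ × H₁)

variable {H₀ H₁}

/-- The block operator `[[A, C], [B, D]]` on `H₀ ⊕ H₁`. -/
def blk (A : H₀ →L[ℂ] H₀) (C : H₁ →L[ℂ] H₀) (B : H₀ →L[ℂ] H₁) (D : H₁ →L[ℂ] H₁) :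
    WithLp 2 (H₀ × H₁) →L[ℂ] WithLp 2 (H₀ × H₁) :=
  inl0 H₀ H₁ ∘L A ∘L fst0 H₀ H₁ + inl0 H₀ H₁ ∘L C ∘L snd1 H₀ H₁ +
    inr1 H₀ H₁ ∘L B ∘L fst0 H₀ H₁ + inr1 H₀ H₁ ∘L D ∘L snd1 H₀ H₁

/-- `Δ`, the orthogonal projection of `H₀ ⊕ H₁` onto `H₁`. -/
def projR : WithLp 2 (H₀ × H₁) →L[ℂ] WithLp 2 (H₀ × H₁) :=
  inr1 H₀ H₁ ∘L snd1 H₀ H₁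

/-- The series product `F₁ ◁ F₂ = F₁ + F₂ + F₁ Δ F₂` on `B(H₀ ⊕ H₁)`. -/
def seriesProd (F₁ F₂ : WithLp 2 (H₀ × H₁) →L[ℂ] WithLp 2 (H₀ × H₁)) :
    WithLp 2 (H₀ × H₁) →L[ℂ] WithLp 2 (H₀ × H₁) :=
  F₁ + F₂ + F₁ * projR * F₂

/-- `F_{Z,L,W} = [[Z - ½L*L, -L*W], [L, W - 1]]`. -/
def FZLW (Z : H₀ →L[ℂ] H₀) (L : H₀ →L[ℂ] H₁) (W : H₁ →L[ℂ] H₁) :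
    WithLp 2 (H₀ × H₁) →L[ℂ] WithLp 2 (H₀ × H₁) :=
  blk (Z - (2 : ℂ)⁻¹ • (adjoint L ∘L L)) (-(adjoint L ∘L W)) L (W - 1)

/-- Meaningful for `0 ≤ S`; for `S` not self-adjoint, `cfc` returns the junk value `0`. -/
def invSqrtOnePlus {K : Type*} [NormedAddCommGroup K] [InnerProductSpace ℂ K] [CompleteSpace K]
    (S : K →L[ℂ] K) : K →L[ℂ] K :=
  cfc (fun x : ℝ => (1 + x) ^ (-(1 / 2 : ℝ))) S

def VL (L : H₀ →L[ℂ] H₁) : WithLp 2 (H₀ × H₁) →L[ℂ] WithLp 2 (H₀ × H₁) :=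
  blk (invSqrtOnePlus (adjoint L ∘L L))
    (-(adjoint L ∘L invSqrtOnePlus (L ∘L adjoint L)))
    (L ∘L invSqrtOnePlus (adjoint L ∘L L))
    (invSqrtOnePlus (L ∘L adjoint L))

section BlockCalculus

variable {E F : Type*} [NormedAddCommGroup E] [InnerProductSpace ℂ E]
  [NormedAddCommGroup F] [InnerProductSpace ℂ F]

lemma fst0_comp_inl0 : fst0 E F ∘L inl0 E F = ContinuousLinearMap.id ℂ E := by
  ext x; simp [fst0, inl0]

lemma fst0_comp_inr1 : fst0 E F ∘L inr1 E F = 0 := by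
  ext x; simp [fst0, inr1]

lemma snd1_comp_inl0 : snd1 E F ∘L inl0 E F = 0 := by
  ext x; simp [snd1, inl0]

lemma snd1_comp_inr1 : snd1 E F ∘L inr1 E F = ContinuousLinearMap.id ℂ F := by
  ext x; simp [snd1, inr1]

lemma inl0_comp_fst0_add_inr1_comp_snd1 : inl0 E F ∘L fst0 E F + inr1 E F ∘L snd1 E F = 1 := by
  ext x
  apply (WithLp.prodContinuousLinearEquiv 2 ℂ E F).injective
  simp [inl0, inr1, fst0, snd1]
  rfl

lemma blk_comp_blk (A A' : E →L[ℂ] E) (C C' : F →L[ℂ] E) (B B' : E →L[ℂ] F)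
    (D D' : F →L[ℂ] F) :
    blk A C B D ∘L blk A' C' B' D' =
      blk (A ∘L A' + C ∘L B') (A ∘L C' + C ∘L D') (B ∘L A' + D ∘L B') (B ∘L C' + D ∘L D') := by
  simp only [blk, add_comp, comp_add, comp_assoc, ← comp_assoc (fst0 E F),
    ← comp_assoc (snd1 E F), fst0_comp_inl0, fst0_comp_inr1, snd1_comp_inl0, snd1_comp_inr1,
    id_comp, zero_comp, comp_zero, add_zero, zero_add]
  abel

lemma blk_one_zero_zero_one : blk (1 : E →L[ℂ] E) (0 : F →L[ℂ] E) 0 1 = 1 := by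
  simpa only [blk, one_def, id_comp, comp_zero, zero_comp, add_zero]
    using inl0_comp_fst0_add_inr1_comp_snd1

variable [CompleteSpace E] [CompleteSpace F]

lemma adjoint_inl0 : adjoint (inl0 E F) = fst0 E F := by
  refine ((eq_adjoint_iff _ _).mpr fun x y => ?_).symm
  simp [fst0, inl0, WithLp.prod_inner_apply]

lemma adjoint_inr1 : adjoint (inr1 E F) = snd1 E F := by
  refine ((eq_adjoint_iff _ _).mpr fun x y => ?_).symm
  simp [snd1, inr1, WithLp.prod_inner_apply]

lemma adjoint_blk (A : E →L[ℂ] E) (C : F →L[ℂ] E) (B : E →L[ℂ] F) (D : F →L[ℂ] F) :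
    adjoint (blk A C B D) = blk (adjoint A) (adjoint B) (adjoint C) (adjoint D) := by
  have adjoint_fst0 : adjoint (fst0 E F) = inl0 E F := by rw [← adjoint_inl0, adjoint_adjoint]
  have adjoint_snd1 : adjoint (snd1 E F) = inr1 E F := by rw [← adjoint_inr1, adjoint_adjoint]
  simp only [blk, map_add, adjoint_comp, adjoint_inl0, adjoint_inr1, adjoint_fst0, adjoint_snd1,
    comp_assoc]
  abel

end BlockCalculus

structure IsInvSqrtOnePlus {A : Type*} [Semiring A] [Star A] (R T : A) : Prop where
  isSelfAdjoint : IsSelfAdjoint R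
  commute : Commute R T
  mul_self_mul_one_add : R * R * (1 + T) = 1

namespace IsInvSqrtOnePlus

variable {A : Type*} [Semiring A] [Star A] {R T : A}

lemma commute_one_add (h : IsInvSqrtOnePlus R T) : Commute R (1 + T) :=
  (Commute.one_right R).add_right h.commute

lemma one_add_mul_mul_self (h : IsInvSqrtOnePlus R T) : (1 + T) * (R * R) = 1 := by
  rw [← (h.commute_one_add.mul_left h.commute_one_add).eq, h.mul_self_mul_one_add]

lemma mul_one_add_mul (h : IsInvSqrtOnePlus R T) : R * (1 + T) * R = 1 := by
  rw [mul_assoc, ← h.commute_one_add.eq, ← mul_assoc, h.mul_self_mul_one_add]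

end IsInvSqrtOnePlus

lemma isInvSqrtOnePlus_invSqrtOnePlus {K : Type*} [NormedAddCommGroup K] [InnerProductSpace ℂ K]
    [CompleteSpace K] {S : K →L[ℂ] K} (hS : 0 ≤ S) :
    IsInvSqrtOnePlus (invSqrtOnePlus S) S where
  isSelfAdjoint := cfc_predicate _ _
  commute := (Commute.refl S).cfc_real _
  mul_self_mul_one_add := by
    have hpos : ∀ x ∈ spectrum ℝ S, 0 < 1 + x := fun x hx => by
      linarith [spectrum_nonneg_of_nonneg hS hx]
    have hcont : ContinuousOn (fun x : ℝ => (1 + x) ^ (-(1 / 2 : ℝ))) (spectrum ℝ S) :=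
      ContinuousOn.rpow_const (by fun_prop) fun x hx => Or.inl (hpos x hx).ne'
    have hS' : IsSelfAdjoint S := IsSelfAdjoint.of_nonneg hS
    have one_add_eq : 1 + S = cfc (fun x : ℝ => 1 + x) S := by
      rw [cfc_const_add 1 (fun x => x) S, cfc_id' ℝ S, map_one]
    rw [one_add_eq, invSqrtOnePlus, ← cfc_mul _ _ S, ← cfc_mul _ _ S, ← cfc_one ℝ S]
    refine cfc_congr fun x hx => ?_
    simp only [Pi.one_apply]
    rw [← Real.rpow_add (hpos x hx), ← Real.rpow_add_one (hpos x hx).ne']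
    norm_num

lemma comp_eq_comp_of_comp_eq_comp {𝕜 M N : Type*} [Semiring 𝕜]
    [TopologicalSpace M] [AddCommMonoid M] [Module 𝕜 M]
    [TopologicalSpace N] [AddCommMonoid N] [Module 𝕜 N]
    {L : M →L[𝕜] N} {A A' : M →L[𝕜] M} {B B' : N →L[𝕜] N}
    (h : L ∘L A = B ∘L L) (hA : A * A' = 1) (hB : B' * B = 1) : L ∘L A' = B' ∘L L :=
  calc L ∘L A' = (B' * B) ∘L L ∘L A' := by rw [hB, one_def, id_comp]
    _ = B' ∘L (L ∘L A) ∘L A' := by rw [h]; rfl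
    _ = B' ∘L L := by rw [comp_assoc, ← mul_def, hA, one_def, comp_id]

section Unitary

variable {E F : Type*} [NormedAddCommGroup E] [InnerProductSpace ℂ E] [CompleteSpace E]
  [NormedAddCommGroup F] [InnerProductSpace ℂ F] [CompleteSpace F]
  {L : E →L[ℂ] F} {R : E →L[ℂ] E} {S : F →L[ℂ] F}

lemma adjoint_blk_mul_blk_eq_one (hR : IsInvSqrtOnePlus R (adjoint L ∘L L))
    (hS : IsInvSqrtOnePlus S (L ∘L adjoint L)) :
    adjoint (blk R (-(adjoint L ∘L S)) (L ∘L R) S) * blk R (-(adjoint L ∘L S)) (L ∘L R) S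
      = 1 := by
  rw [adjoint_blk, mul_def, blk_comp_blk, ← blk_one_zero_zero_one]
  simp only [adjoint_comp, map_neg, adjoint_adjoint, hR.isSelfAdjoint.adjoint_eq,
    hS.isSelfAdjoint.adjoint_eq]
  congr 1
  · rw [← hR.mul_one_add_mul]
    simp only [mul_def, add_comp, comp_add, one_def, comp_id, comp_assoc]
  · simp only [comp_neg, comp_assoc, neg_add_cancel]
  · simp only [neg_comp, comp_assoc, neg_add_cancel]
  · rw [← hS.mul_one_add_mul]
    simp only [mul_def, add_comp, comp_add, one_def, comp_id, comp_assoc, neg_comp, comp_neg,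
      neg_neg]
    abel

lemma blk_mul_adjoint_blk_eq_one (hR : IsInvSqrtOnePlus R (adjoint L ∘L L))
    (hS : IsInvSqrtOnePlus S (L ∘L adjoint L)) :
    blk R (-(adjoint L ∘L S)) (L ∘L R) S * adjoint (blk R (-(adjoint L ∘L S)) (L ∘L R) S)
      = 1 := by
  have one_add_intertwine : L ∘L (1 + adjoint L ∘L L) = (1 + L ∘L adjoint L) ∘L L := by
    simp only [comp_add, add_comp, one_def, comp_id, id_comp, comp_assoc]
  have intertwine : L ∘L (R * R) = (S * S) ∘L L :=
    comp_eq_comp_of_comp_eq_comp one_add_intertwine hR.one_add_mul_mul_self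
      hS.mul_self_mul_one_add
  have intertwine' : (R * R) ∘L adjoint L = adjoint L ∘L (S * S) := by
    simpa only [adjoint_comp, mul_def, hR.isSelfAdjoint.adjoint_eq, hS.isSelfAdjoint.adjoint_eq]
      using congrArg adjoint intertwine
  rw [adjoint_blk, mul_def, blk_comp_blk, ← blk_one_zero_zero_one]
  simp only [adjoint_comp, map_neg, adjoint_adjoint, hR.isSelfAdjoint.adjoint_eq,
    hS.isSelfAdjoint.adjoint_eq]
  congr 1
  · rw [neg_comp, comp_neg, neg_neg, comp_assoc, ← comp_assoc S, ← mul_def S, ← intertwine,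
      ← hR.one_add_mul_mul_self]
    simp only [mul_def, add_comp, one_def, id_comp, comp_assoc]
  · rw [← comp_assoc, ← mul_def, intertwine', neg_comp, comp_assoc, ← mul_def, add_neg_cancel]
  · rw [comp_assoc, ← mul_def, intertwine, comp_neg, ← comp_assoc, ← mul_def, add_neg_cancel]
  · rw [comp_assoc, ← comp_assoc R, ← mul_def, intertwine', ← comp_assoc, ← mul_def S,
      ← hS.one_add_mul_mul_self]
    simp only [mul_def, add_comp, one_def, id_comp, add_comm]

end Unitary

theorem VL_unitary (L : H₀ →L[ℂ] H₁) :
    adjoint (VL L) * VL L = 1 ∧ VL L * adjoint (VL L) = 1 := by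
  have hR := isInvSqrtOnePlus_invSqrtOnePlus
    ((nonneg_iff_isPositive _).mpr (isPositive_adjoint_comp_self L))
  have hS := isInvSqrtOnePlus_invSqrtOnePlus
    ((nonneg_iff_isPositive _).mpr (isPositive_self_comp_adjoint L))
  exact ⟨adjoint_blk_mul_blk_eq_one hR hS, blk_mul_adjoint_blk_eq_one hR hS⟩
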